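/- Let C ⊆ ℝ^d be a finite set of n ≥ 1 distinct points, and suppose there is a group G of isometries of ℝ^d such that each element of G maps C to C and G acts transitively on C (this holds in particular when C is the vertex set of a vertex-transitive polytope). Then Ψ(C) is the set of all n! orderings of C. -/

import Mathlib

/-- `sumDist V x = Σ_{v ∈ V} ‖x − v‖` (with multiplicity). -/
noncomputable def sumDist {d : ℕ} (V : Multiset (EuclideanSpace ℝ (Fin d)))
    (x : EuclideanSpace ℝ (Fin d)) : ℝ :=
  (V.map fun v => dist x v).sum

/-- `Ψ(C) = ∪_{k ≥ 1} Ψ_k(C)`: the set of orderings of `C` (injective enumerations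
`σ : Fin n → ℝ^d` of `C`) witnessed by some nonempty finite multiset `V` of vantage
points that distinguishes the points of `C`, with `D_V` strictly increasing along `σ`. -/
def PsiAll {d : ℕ} (n : ℕ) (C : Finset (EuclideanSpace ℝ (Fin d))) :
    Set (Fin n → EuclideanSpace ℝ (Fin d)) :=
  {σ | Function.Injective σ ∧ (∀ i, σ i ∈ C) ∧
    ∃ V : Multiset (EuclideanSpace ℝ (Fin d)), 1 ≤ Multiset.card V ∧
      Set.InjOn (sumDist V) ↑C ∧ StrictMono fun i => sumDist V (σ i)}

open MeasureTheory Set RealInnerProductSpace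
open scoped Classical

/-! ### One-dimensional step-function machinery -/

noncomputable def stepI (a b : ℝ) : ℝ → ℝ := (Set.Ico a b).indicator fun _ => (1:ℝ)

noncomputable def stepPsi (t : ℝ) : ℝ → ℝ := fun r => if r < t then 1 else 0

lemma integrable_stepI (a b : ℝ) : MeasureTheory.Integrable (stepI a b) := by
  rw [stepI, integrable_indicator_iff measurableSet_Ico]
  exact integrableOn_const (by simp [Real.volume_Ico])

lemma stepI_mul (a b c d r : ℝ) : stepI a b r * stepI c d r = stepI (max a c) (min b d) r := by
  simp only [stepI, Set.indicator_apply, Set.mem_Ico, max_le_iff, lt_min_iff]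
  split_ifs with h1 h2 h3 <;> simp_all

lemma integral_stepI (a b : ℝ) : ∫ r, stepI a b r = max (b - a) 0 := by
  rw [stepI, integral_indicator measurableSet_Ico, setIntegral_const, Real.volume_real_Ico,
    smul_eq_mul, mul_one]

lemma stepPsi_sub (p q r : ℝ) : stepPsi p r - stepPsi q r = stepI q p r - stepI p q r := by
  simp only [stepPsi, stepI, Set.indicator_apply, Set.mem_Ico]
  split_ifs <;> simp_all <;> linarith

lemma stepPsi_sub_sq (p q r : ℝ) :
    (stepPsi p r - stepPsi q r) ^ 2 = stepI q p r + stepI p q r := by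
  simp only [stepPsi, stepI, Set.indicator_apply, Set.mem_Ico]
  split_ifs <;> simp_all <;> linarith

noncomputable def stepF (s : Fin n → ℝ) (i : Fin n) : ℝ → ℝ :=
  fun r => stepPsi (s i) r - stepPsi 0 r

lemma integrable_stepI_comb (a b c d e f g h : ℝ) :
    MeasureTheory.Integrable (fun r => (stepI a b r - stepI c d r) * (stepI e f r - stepI g h r)) := by
  have heq : (fun r => (stepI a b r - stepI c d r) * (stepI e f r - stepI g h r))
      = fun r => ((stepI (max a e) (min b f) r - stepI (max a g) (min b h) r)
          - stepI (max c e) (min d f) r) + stepI (max c g) (min d h) r := by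
    funext r; rw [← stepI_mul, ← stepI_mul, ← stepI_mul, ← stepI_mul]; ring
  rw [heq]
  exact (((integrable_stepI _ _).sub (integrable_stepI _ _)).sub
    (integrable_stepI _ _)).add (integrable_stepI _ _)

lemma integrable_stepF_mul (s : Fin n → ℝ) (i j : Fin n) :
    MeasureTheory.Integrable (fun r => stepF s i r * stepF s j r) := by
  have heq : (fun r => stepF s i r * stepF s j r)
      = fun r => (stepI 0 (s i) r - stepI (s i) 0 r) * (stepI 0 (s j) r - stepI (s j) 0 r) := by
    funext r; rw [stepF, stepF, stepPsi_sub, stepPsi_sub]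
  rw [heq]; exact integrable_stepI_comb _ _ _ _ _ _ _ _

lemma integral_stepF_sq_sub (s : Fin n → ℝ) (i j : Fin n) :
    ∫ r, (stepF s i r - stepF s j r) ^ 2 = |s i - s j| := by
  have heq : (fun r => (stepF s i r - stepF s j r) ^ 2)
      = fun r => stepI (s j) (s i) r + stepI (s i) (s j) r := by
    funext r
    have : stepF s i r - stepF s j r = stepPsi (s i) r - stepPsi (s j) r := by
      rw [stepF, stepF]; ring
    rw [this, stepPsi_sub_sq]
  rw [heq, integral_add (integrable_stepI _ _) (integrable_stepI _ _),
    integral_stepI, integral_stepI]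
  rcases le_total (s i) (s j) with h | h
  · rw [abs_of_nonpos (by linarith), max_eq_right (by linarith), max_eq_left (by linarith)]; ring
  · rw [abs_of_nonneg (by linarith), max_eq_left (by linarith), max_eq_right (by linarith)]; ring

lemma pair_identity (s : Fin n → ℝ) (i j : Fin n) :
    |s i - s j| = (∫ r, stepF s i r * stepF s i r) + (∫ r, stepF s j r * stepF s j r)
      - 2 * ∫ r, stepF s i r * stepF s j r := by
  have h2 : ∫ r, (stepF s i r - stepF s j r) ^ 2
      = (∫ r, stepF s i r * stepF s i r) + (∫ r, stepF s j r * stepF s j r)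
        - 2 * ∫ r, stepF s i r * stepF s j r := by
    have heq : (fun r => (stepF s i r - stepF s j r) ^ 2)
        = fun r => (stepF s i r * stepF s i r + stepF s j r * stepF s j r)
            - 2 * (stepF s i r * stepF s j r) := by
      funext r; ring
    rw [heq, integral_sub (by exact (integrable_stepF_mul s i i).add (integrable_stepF_mul s j j))
      (by exact (integrable_stepF_mul s i j).const_mul 2),
      integral_add (integrable_stepF_mul s i i) (integrable_stepF_mul s j j),
      integral_const_mul]
  rw [← integral_stepF_sq_sub s i j, h2]

lemma stepG_sq_eq (s : Fin n → ℝ) (a : Fin n → ℝ) :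
    (fun r => (∑ i, a i * stepF s i r) ^ 2)
      = fun r => ∑ j, ∑ i, (a j * a i) * (stepF s j r * stepF s i r) := by
  funext r
  rw [sq, Finset.sum_mul_sum]
  exact Finset.sum_congr rfl fun j _ => Finset.sum_congr rfl fun i _ => by ring

lemma integrable_stepG_sq (s : Fin n → ℝ) (a : Fin n → ℝ) :
    MeasureTheory.Integrable (fun r => (∑ i, a i * stepF s i r) ^ 2) := by
  rw [stepG_sq_eq]
  exact integrable_finset_sum _ fun j _ => integrable_finset_sum _
    fun i _ => (integrable_stepF_mul s j i).const_mul _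

lemma integral_stepG_sq (s : Fin n → ℝ) (a : Fin n → ℝ) :
    ∫ r, (∑ i, a i * stepF s i r) ^ 2
      = ∑ j, ∑ i, (a j * a i) * ∫ r, stepF s j r * stepF s i r := by
  rw [stepG_sq_eq, integral_finset_sum _ fun j _ => integrable_finset_sum _
    fun i _ => (integrable_stepF_mul s j i).const_mul _]
  exact Finset.sum_congr rfl fun j _ => by
    rw [integral_finset_sum _ fun i _ => (integrable_stepF_mul s j i).const_mul _]
    exact Finset.sum_congr rfl fun i _ => integral_const_mul _ _

lemma oneD_key (s : Fin n → ℝ) (a : Fin n → ℝ) (ha : ∑ i, a i = 0) :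
    ∑ j, ∑ i, a j * a i * |s j - s i| =
      -2 * ∫ r, (∑ i, a i * stepF s i r) ^ 2 := by
  rw [integral_stepG_sq]
  have expand : ∀ j i : Fin n, a j * a i * |s j - s i|
      = (a j * (∫ r, stepF s j r * stepF s j r)) * a i
        + a j * (a i * (∫ r, stepF s i r * stepF s i r))
        - 2 * ((a j * a i) * ∫ r, stepF s j r * stepF s i r) := by
    intro j i; rw [pair_identity s j i]; ring
  calc ∑ j, ∑ i, a j * a i * |s j - s i|
      = ∑ j, ∑ i, ((a j * (∫ r, stepF s j r * stepF s j r)) * a i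
        + a j * (a i * (∫ r, stepF s i r * stepF s i r))
        - 2 * ((a j * a i) * ∫ r, stepF s j r * stepF s i r)) := by
        exact Finset.sum_congr rfl fun j _ => Finset.sum_congr rfl fun i _ => expand j i
    _ = ∑ j, ((a j * (∫ r, stepF s j r * stepF s j r)) * ∑ i, a i
        + a j * ∑ i, (a i * (∫ r, stepF s i r * stepF s i r))
        - 2 * ∑ i, ((a j * a i) * ∫ r, stepF s j r * stepF s i r)) := by
        refine Finset.sum_congr rfl fun j _ => ?_
        rw [Finset.sum_sub_distrib, Finset.sum_add_distrib, ← Finset.mul_sum, ← Finset.mul_sum,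
          ← Finset.mul_sum]
    _ = -2 * ∑ j, ∑ i, (a j * a i) * ∫ r, stepF s j r * stepF s i r := by
        rw [ha]
        have : ∑ j, (a j * ∑ i, (a i * (∫ r, stepF s i r * stepF s i r)))
            = (∑ j, a j) * ∑ i, (a i * (∫ r, stepF s i r * stepF s i r)) := by
          rw [Finset.sum_mul]
        rw [Finset.sum_sub_distrib, Finset.sum_add_distrib, this, ha]
        rw [← Finset.mul_sum]
        ring_nf
        simp [Finset.mul_sum]

lemma oneD_nonpos (s : Fin n → ℝ) (a : Fin n → ℝ) (ha : ∑ i, a i = 0) :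
    ∑ j, ∑ i, a j * a i * |s j - s i| ≤ 0 := by
  rw [oneD_key s a ha]
  have := integral_nonneg (μ := volume) (f := fun r => (∑ i, a i * stepF s i r) ^ 2) (fun r => sq_nonneg _)
  linarith

lemma stepG_eq (s : Fin n → ℝ) (a : Fin n → ℝ) (ha : ∑ i, a i = 0) (r : ℝ) :
    ∑ i, a i * stepF s i r = ∑ i ∈ Finset.univ.filter (fun i => r < s i), a i := by
  have : ∑ i, a i * stepF s i r
      = (∑ i, a i * stepPsi (s i) r) - (∑ i, a i) * stepPsi 0 r := by
    rw [Finset.sum_mul]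
    rw [← Finset.sum_sub_distrib]
    exact Finset.sum_congr rfl fun i _ => by rw [stepF]; ring
  rw [this, ha, zero_mul, sub_zero]
  rw [Finset.sum_filter]
  exact Finset.sum_congr rfl fun i _ => by
    rw [stepPsi]; split_ifs <;> simp

lemma oneD_zero (s : Fin n → ℝ) (hs : Function.Injective s) (a : Fin n → ℝ)
    (ha : ∑ i, a i = 0)
    (hg : ∀ᵐ r, (∑ i, a i * stepF s i r) = 0) : a = 0 := by
  set N := {r : ℝ | ¬ (∑ i, a i * stepF s i r) = 0} with hN
  have hNnull : volume N = 0 := hg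
  funext k
  set ε : ℝ := Finset.univ.inf' ⟨k, Finset.mem_univ k⟩
      (fun i => if i = k then 1 else |s i - s k|) with hε
  have hεpos : 0 < ε := by
    rw [hε]; refine (Finset.lt_inf'_iff _).2 ?_
    intro i _
    split_ifs with h
    · norm_num
    · exact abs_pos.2 (sub_ne_zero.2 fun hc => h (hs hc))
  have hεle : ∀ i, i ≠ k → ε ≤ |s i - s k| := by
    intro i hi
    have := Finset.inf'_le (fun j => if j = k then 1 else |s j - s k|) (Finset.mem_univ i)
    rwa [if_neg hi] at this
  have pick : ∀ u v : ℝ, u < v → ∃ r ∈ Ioo u v, r ∉ N := by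
    intro u v huv
    by_contra hcon
    push_neg at hcon
    have : Ioo u v ⊆ N := fun r hr => hcon r hr
    have h0 := measure_mono_null this hNnull
    rw [Real.volume_Ioo] at h0
    simp only [ENNReal.ofReal_eq_zero] at h0
    linarith
  obtain ⟨r, hr, hrN⟩ := pick (s k - ε) (s k) (by linarith)
  obtain ⟨r', hr', hrN'⟩ := pick (s k) (s k + ε) (by linarith)
  have gr : ∑ i ∈ Finset.univ.filter (fun i => r < s i), a i = 0 := by
    rw [← stepG_eq s a ha]; by_contra hc; exact hrN hc
  have gr' : ∑ i ∈ Finset.univ.filter (fun i => r' < s i), a i = 0 := by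
    rw [← stepG_eq s a ha]; by_contra hc; exact hrN' hc
  have hfilter : Finset.univ.filter (fun i => r < s i)
      = insert k (Finset.univ.filter (fun i => r' < s i)) := by
    ext i
    simp only [Finset.mem_filter, Finset.mem_univ, true_and, Finset.mem_insert]
    constructor
    · intro hlt
      by_cases hik : i = k
      · exact Or.inl hik
      · refine Or.inr ?_
        rcases le_abs.1 (hεle i hik) with h | h
        · linarith [hr.1, hr.2, hr'.1, hr'.2]
        · rw [neg_sub] at h; linarith [hr.1, hr.2, hr'.1, hr'.2]
    · rintro (rfl | hlt)
      · exact hr.2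
      · linarith [hr.2, hr'.1]
  have hknot : k ∉ Finset.univ.filter (fun i => r' < s i) := by
    simp only [Finset.mem_filter, Finset.mem_univ, true_and]
    exact not_lt.2 (le_of_lt hr'.1)
  rw [hfilter, Finset.sum_insert hknot, gr'] at gr
  simpa using gr

lemma oneD_lt (s : Fin n → ℝ) (hs : Function.Injective s) (a : Fin n → ℝ)
    (ha : ∑ i, a i = 0) (hA : a ≠ 0) :
    ∑ j, ∑ i, a j * a i * |s j - s i| < 0 := by
  rcases lt_or_eq_of_le (oneD_nonpos s a ha) with h | h
  · exact h
  exfalso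
  apply hA
  rw [oneD_key s a ha] at h
  have hI : ∫ r, (∑ i, a i * stepF s i r) ^ 2 = 0 := by linarith
  have hsq := (integral_eq_zero_iff_of_nonneg
    (fun r => sq_nonneg (∑ i, a i * stepF s i r)) (integrable_stepG_sq s a)).1 hI
  refine oneD_zero s hs a ha ?_
  filter_upwards [hsq] with r hr
  exact pow_eq_zero_iff (by norm_num) |>.1 hr

/-! ### The ball-average of |⟪w, ·⟫| is a positive multiple of the norm -/

variable {d : ℕ}

noncomputable def phiB (d : ℕ) (w : EuclideanSpace ℝ (Fin d)) : ℝ :=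
  ∫ u in Metric.ball (0 : EuclideanSpace ℝ (Fin d)) 1, |⟪w, u⟫|

lemma integrableOn_absInner (w : EuclideanSpace ℝ (Fin d)) :
    IntegrableOn (fun u => |⟪w, u⟫|) (Metric.ball (0 : EuclideanSpace ℝ (Fin d)) 1) := by
  have hc : Continuous fun u : EuclideanSpace ℝ (Fin d) => |⟪w, u⟫| :=
    (continuous_const.inner continuous_id).abs
  exact (hc.continuousOn.integrableOn_compact (isCompact_closedBall _ _)).mono_set
    Metric.ball_subset_closedBall

lemma phiB_isometry (f : EuclideanSpace ℝ (Fin d) ≃ₗᵢ[ℝ] EuclideanSpace ℝ (Fin d))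
    (w : EuclideanSpace ℝ (Fin d)) : phiB d (f w) = phiB d w := by
  have hemb : MeasurableEmbedding f := f.toHomeomorph.measurableEmbedding
  have hball : f ⁻¹' (Metric.ball 0 1) = Metric.ball (0 : EuclideanSpace ℝ (Fin d)) 1 := by
    ext u
    simp [Metric.mem_ball, dist_zero_right, f.norm_map]
  have := (f.measurePreserving).setIntegral_preimage_emb hemb
    (fun y => |⟪f w, y⟫|) (Metric.ball 0 1)
  rw [hball] at this
  rw [phiB, phiB, ← this]
  refine setIntegral_congr_fun measurableSet_ball fun u _ => ?_
  rw [f.inner_map_map]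

lemma phiB_smul (c : ℝ) (w : EuclideanSpace ℝ (Fin d)) : phiB d (c • w) = |c| * phiB d w := by
  rw [phiB, phiB, ← integral_const_mul]
  refine setIntegral_congr_fun measurableSet_ball fun u _ => ?_
  rw [real_inner_smul_left, abs_mul]

lemma phiB_eq_norm [Nontrivial (EuclideanSpace ℝ (Fin d))] :
    ∃ K : ℝ, 0 < K ∧ ∀ w : EuclideanSpace ℝ (Fin d), phiB d w = K * ‖w‖ := by
  obtain ⟨v, hv⟩ := exists_ne (0 : EuclideanSpace ℝ (Fin d))
  set e : EuclideanSpace ℝ (Fin d) := ‖v‖⁻¹ • v with he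
  have hnv : ‖v‖ ≠ 0 := norm_ne_zero_iff.2 hv
  have hne : ‖e‖ = 1 := by
    rw [he, norm_smul, norm_inv, norm_norm, inv_mul_cancel₀ hnv]
  refine ⟨phiB d e, ?_, ?_⟩
  · rw [phiB]
    rw [setIntegral_pos_iff_support_of_nonneg_ae
      (Filter.Eventually.of_forall fun u => abs_nonneg _) (integrableOn_absInner e)]
    have hsub : Metric.ball ((2:ℝ)⁻¹ • e) (2⁻¹)
        ⊆ Function.support (fun u => |⟪e, u⟫|) ∩ Metric.ball 0 1 := by
      intro u hu
      rw [Metric.mem_ball, dist_eq_norm] at hu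
      have h1 : |⟪e, u - (2:ℝ)⁻¹ • e⟫| < 2⁻¹ :=
        lt_of_le_of_lt ((abs_real_inner_le_norm e _).trans (by rw [hne, one_mul])) hu
      have h2 : ⟪e, u⟫ = ⟪e, u - (2:ℝ)⁻¹ • e⟫ + 2⁻¹ := by
        rw [inner_sub_right, real_inner_smul_right, real_inner_self_eq_norm_sq, hne]
        norm_num
      constructor
      · have := abs_lt.1 h1
        have hpos : 0 < ⟪e, u⟫ := by rw [h2]; linarith [this.1]
        simp only [Function.mem_support, ne_eq, abs_eq_zero]
        linarith
      · rw [Metric.mem_ball, dist_zero_right]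
        calc ‖u‖ = ‖(u - (2:ℝ)⁻¹ • e) + (2:ℝ)⁻¹ • e‖ := by rw [sub_add_cancel]
          _ ≤ ‖u - (2:ℝ)⁻¹ • e‖ + ‖(2:ℝ)⁻¹ • e‖ := norm_add_le _ _
          _ < 2⁻¹ + 2⁻¹ := by
              refine add_lt_add_of_lt_of_le hu ?_
              rw [norm_smul, hne]
              norm_num
          _ = 1 := by norm_num
    refine lt_of_lt_of_le ?_ (measure_mono hsub)
    exact Metric.measure_ball_pos _ _ (by norm_num)
  · intro w
    rcases eq_or_ne w 0 with rfl | hw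
    · simp only [norm_zero, mul_zero, phiB, inner_zero_left, abs_zero, integral_zero]
    · set e' : EuclideanSpace ℝ (Fin d) := ‖w‖⁻¹ • w with he'
      have hne' : ‖e'‖ = 1 := by
        rw [he', norm_smul, norm_inv, norm_norm, inv_mul_cancel₀ (norm_ne_zero_iff.2 hw)]
      have hwe : w = ‖w‖ • e' := by
        rw [he', smul_smul, mul_inv_cancel₀ (norm_ne_zero_iff.2 hw), one_smul]
      have hrefl : (Submodule.reflection (ℝ ∙ (e' - e))ᗮ) e' = e := Submodule.reflection_sub (by rw [hne', hne])
      calc phiB d w = phiB d (‖w‖ • e') := by rw [← hwe]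
        _ = |‖w‖| * phiB d e' := phiB_smul _ _
        _ = ‖w‖ * phiB d e' := by rw [abs_of_nonneg (norm_nonneg w)]
        _ = ‖w‖ * phiB d e := by rw [← hrefl, phiB_isometry]
        _ = phiB d e * ‖w‖ := by ring

lemma dist_cnd {d m : ℕ} (x : Fin (m + 2) → EuclideanSpace ℝ (Fin d))
    (hx : Function.Injective x) (a : Fin (m + 2) → ℝ) (ha : ∑ i, a i = 0)
    (h0 : ∑ j, ∑ i, a j * a i * dist (x j) (x i) = 0) : a = 0 := by
  by_contra hA
  haveI : Nontrivial (EuclideanSpace ℝ (Fin d)) :=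
    ⟨⟨x 0, x 1, fun h => by simpa using hx h⟩⟩
  obtain ⟨K, hK, hphi⟩ := phiB_eq_norm (d := d)
  set B := Metric.ball (0 : EuclideanSpace ℝ (Fin d)) 1 with hB
  set Q : EuclideanSpace ℝ (Fin d) → ℝ :=
    fun u => ∑ j, ∑ i, a j * a i * |⟪x j - x i, u⟫| with hQ
  have hQs : ∀ u, Q u = ∑ j, ∑ i, a j * a i * |⟪x j, u⟫ - ⟪x i, u⟫| := by
    intro u
    exact Finset.sum_congr rfl fun j _ => Finset.sum_congr rfl fun i _ => by
      rw [inner_sub_left]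
  have hQint : IntegrableOn Q B := by
    refine integrable_finset_sum _ fun j _ => integrable_finset_sum _ fun i _ => ?_
    exact (integrableOn_absInner (x j - x i)).const_mul _
  have key : K * (∑ j, ∑ i, a j * a i * dist (x j) (x i)) = ∫ u in B, Q u := by
    rw [integral_finset_sum _ fun j _ => integrable_finset_sum _
      fun i _ => (integrableOn_absInner (x j - x i)).const_mul (a j * a i)]
    rw [Finset.mul_sum]
    refine Finset.sum_congr rfl fun j _ => ?_
    rw [integral_finset_sum _ fun i _ => (integrableOn_absInner (x j - x i)).const_mul (a j * a i),
      Finset.mul_sum]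
    refine Finset.sum_congr rfl fun i _ => ?_
    rw [integral_const_mul, ← phiB, hphi, dist_eq_norm]
    ring
  have hQle : ∀ u, Q u ≤ 0 := fun u => by
    rw [hQs u]; exact oneD_nonpos (fun i => ⟪x i, u⟫) a ha
  have hI0 : ∫ u in B, (fun u => -Q u) u = 0 := by
    rw [integral_neg, ← key, h0, mul_zero, neg_zero]
  have hae : (fun u => -Q u) =ᵐ[volume.restrict B] 0 :=
    (integral_eq_zero_iff_of_nonneg (fun u => neg_nonneg.2 (hQle u)) hQint.neg).1 hI0
  have hnull : volume ({u | Q u ≠ 0} ∩ B) = 0 := by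
    have h1 : (volume.restrict B) {u | ¬ (-Q u = 0)} = 0 := hae
    rw [Measure.restrict_apply' measurableSet_ball] at h1
    have : {u | Q u ≠ 0} = {u | ¬ (-Q u = 0)} := by
      ext u; simp [neg_eq_zero]
    rw [this]
    exact h1
  set T : Set (EuclideanSpace ℝ (Fin d)) :=
    ⋃ (p : Fin (m + 2) × Fin (m + 2)), ⋃ (_ : p.1 ≠ p.2),
      ((ℝ ∙ (x p.1 - x p.2))ᗮ : Set (EuclideanSpace ℝ (Fin d))) with hT
  have hTnull : volume T = 0 := by
    refine measure_iUnion_null fun p => measure_iUnion_null fun hp => ?_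
    refine Measure.addHaar_submodule _ _ ?_
    intro htop
    have hw : x p.1 - x p.2 ≠ 0 := sub_ne_zero.2 (fun hc => hp (hx hc))
    have : x p.1 - x p.2 ∈ (ℝ ∙ (x p.1 - x p.2))ᗮ := htop ▸ Submodule.mem_top
    rw [Submodule.mem_orthogonal_singleton_iff_inner_right] at this
    exact hw ((inner_self_eq_zero (𝕜 := ℝ)).1 this)
  have hsub : B \ T ⊆ {u | Q u ≠ 0} ∩ B := by
    rintro u ⟨huB, huT⟩
    refine ⟨?_, huB⟩
    have hs : Function.Injective fun i => ⟪x i, u⟫ := by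
      intro i j hij
      by_contra hne
      apply huT
      simp only [ne_eq] at hij
      refine Set.mem_iUnion.2 ⟨(i, j), Set.mem_iUnion.2 ⟨hne, ?_⟩⟩
      rw [SetLike.mem_coe, Submodule.mem_orthogonal_singleton_iff_inner_right,
        inner_sub_left]
      simpa using sub_eq_zero.2 hij
    have hlt := oneD_lt (fun i => ⟪x i, u⟫) hs a ha hA
    simp only [Set.mem_setOf_eq]
    rw [hQs u]
    exact ne_of_lt hlt
  have hpos : 0 < volume (B \ T) := by
    rw [measure_diff_null hTnull]
    exact Metric.measure_ball_pos _ _ (by norm_num)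
  exact absurd (measure_mono_null hsub hnull) (ne_of_gt hpos)

lemma exists_real_weights {d m : ℕ} (x : Fin (m + 2) → EuclideanSpace ℝ (Fin d))
    (hx : Function.Injective x) (τ : Fin (m + 2) → ℝ) :
    ∃ (a : Fin (m + 2) → ℝ) (c : ℝ), ∀ j, (∑ i, a i * dist (x j) (x i)) + c = τ j := by
  set L : EuclideanSpace ℝ (Fin (m + 2)) →ₗ[ℝ] EuclideanSpace ℝ (Fin (m + 2)) :=
    { toFun := fun a => WithLp.toLp 2 (fun j => ∑ i, a i * dist (x j) (x i) : Fin (m + 2) → ℝ)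
      map_add' := by
        intro a b
        ext j
        show ∑ i, (a i + b i) * dist (x j) (x i) = _
        rw [show (WithLp.toLp 2 (fun j => ∑ i, a i * dist (x j) (x i) : Fin (m + 2) → ℝ) +
          WithLp.toLp 2 (fun j => ∑ i, b i * dist (x j) (x i) : Fin (m + 2) → ℝ)) j
            = (∑ i, a i * dist (x j) (x i)) + ∑ i, b i * dist (x j) (x i) from rfl,
          ← Finset.sum_add_distrib]
        exact Finset.sum_congr rfl fun i _ => by ring
      map_smul' := by
        intro c a
        ext j
        show ∑ i, (c * a i) * dist (x j) (x i) = c * ∑ i, a i * dist (x j) (x i)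
        rw [Finset.mul_sum]
        exact Finset.sum_congr rfl fun i _ => by ring } with hL
  set one : EuclideanSpace ℝ (Fin (m + 2)) := WithLp.toLp 2 (fun _ => 1 : Fin (m + 2) → ℝ) with hone
  set W : Submodule ℝ (EuclideanSpace ℝ (Fin (m + 2))) := LinearMap.range L ⊔ (ℝ ∙ one) with hW
  have htop : W = ⊤ := by
    rw [← Submodule.orthogonal_eq_bot_iff]
    rw [Submodule.eq_bot_iff]
    intro z hz
    rw [Submodule.mem_orthogonal] at hz
    have h2 : ∑ i, z i = 0 := by
      have := hz one (Submodule.mem_sup_right (Submodule.mem_span_singleton_self one))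
      rw [PiLp.inner_apply] at this
      simpa [hone] using this
    have h1 : ∑ j, ∑ i, z j * z i * dist (x j) (x i) = 0 := by
      have h := hz (L z) (Submodule.mem_sup_left (LinearMap.mem_range_self L z))
      rw [PiLp.inner_apply] at h
      simp only [RCLike.inner_apply, conj_trivial] at h
      rw [← h]
      refine Finset.sum_congr rfl fun j _ => ?_
      show ∑ i, z j * z i * dist (x j) (x i) = z j * (∑ i, z i * dist (x j) (x i))
      rw [Finset.mul_sum]
      exact Finset.sum_congr rfl fun i _ => by ring
    have hz0 := dist_cnd x hx z h2 h1
    ext i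
    simpa using congrFun hz0 i
  have hτ : WithLp.toLp 2 (fun j => τ j : Fin (m + 2) → ℝ) ∈ W := htop ▸ Submodule.mem_top
  rw [hW, Submodule.mem_sup] at hτ
  obtain ⟨y, ⟨a, rfl⟩, cv, hcv, hsum⟩ := hτ
  rw [Submodule.mem_span_singleton] at hcv
  obtain ⟨c, rfl⟩ := hcv
  refine ⟨a.ofLp, c, fun j => ?_⟩
  have := congrArg (fun v => v j) hsum
  rw [show (L a + c • one) j = (L a) j + c * one j from rfl] at this
  have hLa : (L a) j = ∑ i, a.ofLp i * dist (x j) (x i) := rfl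
  simpa [hone, hLa] using this

lemma int_sub_toNat (z : ℤ) : ((z.toNat : ℝ) - ((-z).toNat : ℝ)) = (z : ℝ) := by
  have h : (z.toNat : ℤ) - ((-z).toNat : ℤ) = z := by omega
  exact_mod_cast h

lemma exists_nat_weights {d n : ℕ} (x : Fin n → EuclideanSpace ℝ (Fin d))
    (hx : Function.Injective x) :
    ∃ p q : Fin n → ℕ,
      StrictMono fun j => ∑ i, ((p i : ℝ) - (q i : ℝ)) * dist (x j) (x i) := by
  match n, x, hx with
  | 0, x, hx => exact ⟨0, 0, fun j k h => j.elim0⟩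
  | 1, x, hx =>
    exact ⟨0, 0, fun j k h => absurd (Subsingleton.elim j k) (ne_of_lt h)⟩
  | (m + 2), x, hx => ?_
  obtain ⟨a, c, hac⟩ := exists_real_weights x hx (fun j => (j : ℝ))
  set g := fun (b : Fin (m + 2) → ℝ) (j : Fin (m + 2)) => ∑ i, b i * dist (x j) (x i) with hg
  set D : ℝ := 1 + ∑ j, ∑ i, dist (x j) (x i) with hD
  have hsum_nonneg : ∀ j : Fin (m + 2), 0 ≤ ∑ i, dist (x j) (x i) :=
    fun j => Finset.sum_nonneg fun i _ => dist_nonneg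
  have hDge : ∀ j, ∑ i, dist (x j) (x i) ≤ D := by
    intro j
    have h1 : ∑ i, dist (x j) (x i) ≤ ∑ j', ∑ i, dist (x j') (x i) :=
      Finset.single_le_sum (f := fun j' => ∑ i, dist (x j') (x i))
        (fun j' _ => hsum_nonneg j') (Finset.mem_univ j)
    rw [hD]; linarith
  obtain ⟨N, hN⟩ := exists_nat_gt (2 * D)
  have hDpos : 0 < D := by
    have := Finset.sum_nonneg fun j (_ : j ∈ Finset.univ) => hsum_nonneg j
    rw [hD]; linarith
  have hNpos : (0:ℝ) < N := by linarith
  have hmono : ∀ j k : Fin (m + 2), j < k → g a j + 1 ≤ g a k := by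
    intro j k hjk
    have hj := hac j
    have hk := hac k
    have hval : (j : ℝ) + 1 ≤ (k : ℝ) := by
      have : (j : ℕ) + 1 ≤ (k : ℕ) := hjk
      exact_mod_cast this
    rw [hg]
    simp only
    linarith
  have key : ∀ j, |∑ i, ((⌊a i * N⌋ : ℝ)) * dist (x j) (x i) - N * g a j| ≤ D := by
    intro j
    have heq : ∑ i, ((⌊a i * N⌋ : ℝ)) * dist (x j) (x i) - N * g a j
        = ∑ i, ((⌊a i * N⌋ : ℝ) - a i * N) * dist (x j) (x i) := by
      rw [hg]
      simp only
      rw [Finset.mul_sum, ← Finset.sum_sub_distrib]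
      exact Finset.sum_congr rfl fun i _ => by ring
    rw [heq]
    calc |∑ i, ((⌊a i * N⌋ : ℝ) - a i * N) * dist (x j) (x i)|
        ≤ ∑ i, |((⌊a i * N⌋ : ℝ) - a i * N) * dist (x j) (x i)| :=
          Finset.abs_sum_le_sum_abs _ _
      _ ≤ ∑ i, dist (x j) (x i) := by
          refine Finset.sum_le_sum fun i _ => ?_
          rw [abs_mul, abs_of_nonneg dist_nonneg]
          have h1 : (⌊a i * N⌋ : ℝ) ≤ a i * N := Int.floor_le _
          have h2 : a i * N < (⌊a i * N⌋ : ℝ) + 1 := Int.lt_floor_add_one _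
          have : |(⌊a i * N⌋ : ℝ) - a i * N| ≤ 1 := abs_le.2 ⟨by linarith, by linarith⟩
          nlinarith [dist_nonneg (x := x j) (y := x i)]
      _ ≤ D := hDge j
  refine ⟨fun i => (⌊a i * N⌋).toNat, fun i => (-⌊a i * N⌋).toNat, ?_⟩
  intro j k hjk
  simp only
  have hcast : ∀ i j', (((⌊a i * N⌋).toNat : ℝ) - ((-⌊a i * N⌋).toNat : ℝ)) * dist (x j') (x i)
      = ((⌊a i * N⌋ : ℝ)) * dist (x j') (x i) := fun i j' => by rw [int_sub_toNat]
  rw [Finset.sum_congr rfl fun i _ => hcast i j, Finset.sum_congr rfl fun i _ => hcast i k]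
  have hkj := key j
  have hkk := key k
  rw [abs_le] at hkj hkk
  have hgm := hmono j k hjk
  have hNg : N * (g a j + 1) ≤ N * g a k := mul_le_mul_of_nonneg_left hgm (le_of_lt hNpos)
  have : 2 * D < N := hN
  nlinarith

section sumDistLemmas

variable {d : ℕ}

lemma sumDist_add (A B : Multiset (EuclideanSpace ℝ (Fin d))) (x : EuclideanSpace ℝ (Fin d)) :
    sumDist (A + B) x = sumDist A x + sumDist B x := by
  simp [sumDist]

lemma sumDist_nsmul (k : ℕ) (A : Multiset (EuclideanSpace ℝ (Fin d)))
    (x : EuclideanSpace ℝ (Fin d)) : sumDist (k • A) x = k * sumDist A x := by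
  induction k with
  | zero => simp [sumDist]
  | succ k ih => rw [succ_nsmul, sumDist_add, ih]; push_cast; ring

lemma sumDist_singleton (v x : EuclideanSpace ℝ (Fin d)) : sumDist {v} x = dist x v := by
  simp [sumDist]

lemma sumDist_sum {ι : Type*} (s : Finset ι) (W : ι → Multiset (EuclideanSpace ℝ (Fin d)))
    (x : EuclideanSpace ℝ (Fin d)) :
    sumDist (∑ i ∈ s, W i) x = ∑ i ∈ s, sumDist (W i) x := by
  induction s using Finset.cons_induction with
  | empty => simp [sumDist]
  | cons i s his ih => rw [Finset.sum_cons, Finset.sum_cons, sumDist_add, ih]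

lemma sumDist_erase {A : Multiset (EuclideanSpace ℝ (Fin d))} {v : EuclideanSpace ℝ (Fin d)}
    (h : v ∈ A) (x : EuclideanSpace ℝ (Fin d)) :
    sumDist (A.erase v) x = sumDist A x - dist x v := by
  have : sumDist A x = dist x v + sumDist (A.erase v) x := by
    conv_lhs => rw [← Multiset.cons_erase h]
    rw [sumDist, Multiset.map_cons, Multiset.sum_cons, ← sumDist]
  linarith

end sumDistLemmas

/-- Let `C ⊆ ℝ^d` be a finite set of `n ≥ 1` distinct points, and suppose there is a
group of isometries of `ℝ^d` each mapping `C` to `C` and acting transitively on `C`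
(equivalently: for all `c, c' ∈ C` there is an isometry of `ℝ^d` mapping `C` into `C`
and sending `c` to `c'`). Then `Ψ(C)` is the set of all `n!` orderings of `C`. -/
theorem psiAll_eq_all_orderings_of_transitive (d : ℕ)
    (C : Finset (EuclideanSpace ℝ (Fin d))) (hn : 1 ≤ C.card)
    (htrans : ∀ c ∈ C, ∀ c' ∈ C,
      ∃ f : EuclideanSpace ℝ (Fin d) ≃ᵢ EuclideanSpace ℝ (Fin d),
        (∀ x ∈ C, f x ∈ C) ∧ f c = c') :
    PsiAll C.card C =
      {σ : Fin C.card → EuclideanSpace ℝ (Fin d) |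
        Function.Injective σ ∧ ∀ i, σ i ∈ C} := by
  apply Set.eq_of_subset_of_subset
  · rintro σ ⟨h1, h2, _⟩
    exact ⟨h1, h2⟩
  rintro σ ⟨hinj, hmem⟩
  refine ⟨hinj, hmem, ?_⟩
  -- σ enumerates C
  have himg : Finset.image σ Finset.univ = C := by
    refine Finset.eq_of_subset_of_card_le (Finset.image_subset_iff.2 fun i _ => hmem i) ?_
    rw [Finset.card_image_of_injective _ hinj, Finset.card_univ, Fintype.card_fin]
  have hsurj : ∀ c ∈ C, ∃ i, σ i = c := by
    intro c hc
    rw [← himg] at hc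
    obtain ⟨i, _, hi⟩ := Finset.mem_image.1 hc
    exact ⟨i, hi⟩
  -- the sum of distances to all of C is constant on C
  have hconst : ∀ c ∈ C, ∀ c' ∈ C, sumDist C.val c' = sumDist C.val c := by
    intro c hc c' hc'
    obtain ⟨f, hfC, hfc⟩ := htrans c hc c' hc'
    have himgf : Finset.image f C = C :=
      Finset.eq_of_subset_of_card_le (Finset.image_subset_iff.2 hfC)
        (by rw [Finset.card_image_of_injective _ f.injective])
    have hval : C.val.map f = C.val := by
      have := Finset.image_val_of_injOn (f := f) (s := C) (f.injective.injOn)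
      rw [himgf] at this
      exact this.symm
    calc sumDist C.val c' = (C.val.map fun v => dist (f c) v).sum := by rw [sumDist, hfc]
      _ = ((C.val.map f).map fun v => dist (f c) v).sum := by rw [hval]
      _ = (C.val.map fun v => dist (f c) (f v)).sum := by rw [Multiset.map_map]; rfl
      _ = (C.val.map fun v => dist c v).sum := by
          congr 1
          exact Multiset.map_congr rfl fun v _ => f.dist_eq c v
      _ = sumDist C.val c := rfl
  set i0 : Fin C.card := ⟨0, hn⟩ with hi0
  set K : ℝ := sumDist C.val (σ i0) with hK
  have hKy : ∀ y ∈ C, sumDist C.val y = K := fun y hy => hconst (σ i0) (hmem i0) y hy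
  obtain ⟨p, q, hpq⟩ := exists_nat_weights σ hinj
  set V : Multiset (EuclideanSpace ℝ (Fin d)) :=
    C.val + ∑ i : Fin C.card, (p i • {σ i} + q i • (C.val.erase (σ i))) with hV
  have hform : ∀ y ∈ C, sumDist V y
      = (K + ∑ i, (q i : ℝ) * K) + ∑ i, ((p i : ℝ) - (q i : ℝ)) * dist y (σ i) := by
    intro y hy
    have hterm : ∀ i : Fin C.card,
        sumDist (p i • ({σ i} : Multiset (EuclideanSpace ℝ (Fin d)))
          + q i • (C.val.erase (σ i))) y
        = (q i : ℝ) * K + ((p i : ℝ) - (q i : ℝ)) * dist y (σ i) := by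
      intro i
      rw [sumDist_add, sumDist_nsmul, sumDist_nsmul, sumDist_singleton,
        sumDist_erase (Finset.mem_def.1 (hmem i)) y, hKy y hy]
      ring
    rw [hV, sumDist_add, sumDist_sum, hKy y hy,
      Finset.sum_congr rfl fun i _ => hterm i, Finset.sum_add_distrib]
    ring
  have hmono : StrictMono fun j => sumDist V (σ j) := by
    intro j k hjk
    simp only
    rw [hform (σ j) (hmem j), hform (σ k) (hmem k)]
    exact add_lt_add_right (hpq hjk) _
  refine ⟨V, ?_, ?_, hmono⟩
  · rw [hV, Multiset.card_add]
    have hcc : Multiset.card C.val = C.card := rfl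
    omega
  · intro y hy z hz h
    obtain ⟨i, rfl⟩ := hsurj y (Finset.mem_coe.1 hy)
    obtain ⟨i', rfl⟩ := hsurj z (Finset.mem_coe.1 hz)
    exact congrArg σ (hmono.injective h)
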